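/- Lemma A.2 (Bellman completeness implies uniformly bounded powers of the whitened cross-covariance). Let 𝒮 be a nonempty finite type, let d ≥ 1, let Φ be a real matrix with rows (φ_i)_{i∈𝒮} in ℝᵈ, let μ : 𝒮 → ℝ be nonnegative with ∑_{i∈𝒮} μ_i = 1, and let P be a row-stochastic 𝒮×𝒮 real matrix (all entries nonnegative, each row summing to 1). Define Σ_cov := Φᵀ·diag(μ)·Φ and Σ_cr := Φᵀ·diag(μ)·P·Φ, and assume Σ_cov is positive definite. Assume the completeness condition: for every θ ∈ ℝᵈ there exists θ′ ∈ ℝᵈ with Φθ′ = PΦθ. Let ρ := max_{i∈𝒮} ‖Σ_cov^{−1/2}·φ_i‖₂. Then for every natural number j, ‖(Σ_cov^{−1/2}·Σ_cr·Σ_cov^{−1/2})ʲ‖ ≤ ρ. -/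

import Mathlib

open scoped Matrix.Norms.L2Operator
open Matrix

namespace Matrix.PosSemidef

open scoped ComplexOrder in
/-- The positive semidefinite square root of a positive semidefinite matrix
(the definition removed from Mathlib, restored with its old meaning). -/
noncomputable def sqrt {n 𝕜 : Type*} [Fintype n] [RCLike 𝕜] [DecidableEq n]
    {A : Matrix n n 𝕜} (hA : PosSemidef A) : Matrix n n 𝕜 :=
  (hA.1.eigenvectorUnitary : Matrix n n 𝕜) * diagonal (((↑) : ℝ → 𝕜) ∘ (fun x => √x) ∘ hA.1.eigenvalues) *
  (star hA.1.eigenvectorUnitary : Matrix n n 𝕜)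

end Matrix.PosSemidef

/-!
Completeness yields a matrix `M` with `Φ M = P Φ`, so `Σ_cr = Σ_cov M` and the whitened
cross-covariance is the conjugate `Σ^{1/2} M Σ^{-1/2}`; its `j`-th power is `Σ^{1/2} M^j Σ^{-1/2}`.
For `θ = Σ^{-1/2} x` we get `‖Σ^{1/2} M^j θ‖² = ∑ᵢ μᵢ (Φ M^j θ)ᵢ² = ∑ᵢ μᵢ (P^j Φ θ)ᵢ²`.
As `P^j` is row-stochastic, `|(P^j Φ θ)ᵢ| ≤ maxₛ |φₛ ⬝ θ| = maxₛ |⟪Σ^{-1/2} φₛ, x⟫| ≤ ρ ‖x‖`.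
-/

open WithLp

namespace Matrix

section Stochastic

variable {R n : Type*} [CommRing R] [LinearOrder R] [IsOrderedRing R] [Fintype n] [DecidableEq n]

theorem abs_mulVec_le_of_mem_rowStochastic {Q : Matrix n n R} (hQ : Q ∈ rowStochastic R n)
    {w : n → R} {B : R} (hw : ∀ s, |w s| ≤ B) (i : n) : |(Q *ᵥ w) i| ≤ B :=
  calc |(Q *ᵥ w) i| = |∑ s, Q i s * w s| := rfl
    _ ≤ ∑ s, Q i s * |w s| := by
      refine (Finset.abs_sum_le_sum_abs _ _).trans_eq (Finset.sum_congr rfl fun s _ => ?_)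
      rw [abs_mul, abs_of_nonneg (nonneg_of_mem_rowStochastic hQ)]
    _ ≤ ∑ s, Q i s * B := Finset.sum_le_sum fun s _ =>
      mul_le_mul_of_nonneg_left (hw s) (nonneg_of_mem_rowStochastic hQ)
    _ = B := by rw [← Finset.sum_mul, sum_row_of_mem_rowStochastic hQ, one_mul]

end Stochastic

section Semiring

variable {R m n k : Type*} [CommSemiring R] [Fintype n]

theorem exists_mul_eq_of_forall_exists_mulVec_eq [Fintype k] [DecidableEq k] {Φ : Matrix m n R}
    {C : Matrix m k R} (h : ∀ θ, ∃ θ', Φ *ᵥ θ' = C *ᵥ θ) : ∃ M : Matrix n k R, Φ * M = C := by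
  choose θ' hθ' using h
  refine ⟨(of fun l => θ' (Pi.single l 1))ᵀ, ext fun i l => ?_⟩
  simpa [mulVec, dotProduct, mul_apply, Pi.single_apply] using congrFun (hθ' (Pi.single l 1)) i

theorem mul_pow_eq_pow_mul_of_mul_eq [Fintype m] [DecidableEq m] [DecidableEq n]
    {Φ : Matrix m n R} {M : Matrix n n R} {P : Matrix m m R} (h : Φ * M = P * Φ) (j : ℕ) :
    Φ * M ^ j = P ^ j * Φ := by
  induction j with
  | zero => simp
  | succ j ih =>
    rw [pow_succ, pow_succ, ← Matrix.mul_assoc, ih, Matrix.mul_assoc, h, Matrix.mul_assoc]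

theorem dotProduct_transpose_mul_diagonal_mul_mulVec [Fintype m] [DecidableEq m]
    (Φ : Matrix m n R) (μ : m → R) (v : n → R) :
    v ⬝ᵥ ((Φᵀ * diagonal μ * Φ) *ᵥ v) = ∑ i, μ i * (Φ *ᵥ v) i ^ 2 := by
  rw [← mulVec_mulVec, ← mulVec_mulVec, dotProduct_mulVec, vecMul_transpose]
  simp only [dotProduct, mulVec_diagonal]
  exact Finset.sum_congr rfl fun i _ => by ring

end Semiring

theorem inv_mul_mul_self_mul_mul_inv_pow {K n : Type*} [Field K] [Fintype n] [DecidableEq n]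
    {R : Matrix n n K} (hR : IsUnit R) (M : Matrix n n K) (j : ℕ) :
    (R⁻¹ * (R * R * M) * R⁻¹) ^ j = R * M ^ j * R⁻¹ := by
  have hconj : R⁻¹ * (R * R * M) * R⁻¹ = R * M * R⁻¹ := by
    rw [Matrix.mul_assoc R R M, ← Matrix.mul_assoc R⁻¹ R,
      nonsing_inv_mul _ ((isUnit_iff_isUnit_det R).1 hR), Matrix.one_mul]
  simpa [hconj, coe_units_inv] using Units.conj_pow hR.unit M j

theorem l2_opNorm_le_of_forall_norm_le {𝕜 m n : Type*} [RCLike 𝕜] [Fintype m] [Fintype n]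
    [DecidableEq n] {A : Matrix m n 𝕜} {c : ℝ} (hc : 0 ≤ c)
    (h : ∀ x : EuclideanSpace 𝕜 n, ‖toLp 2 (A *ᵥ ofLp x)‖ ≤ c * ‖x‖) : ‖A‖ ≤ c :=
  ContinuousLinearMap.opNorm_le_bound _ hc h

theorem abs_mulVec_mulVec_apply_le {m n : Type*} [Fintype n] {T : Matrix n n ℝ} (hT : T.IsSymm)
    (Φ : Matrix m n ℝ) (x : EuclideanSpace ℝ n) (i : m) :
    |(Φ *ᵥ (T *ᵥ ofLp x)) i| ≤ ‖toLp 2 (T *ᵥ Φ i)‖ * ‖x‖ := by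
  have hinner : (Φ *ᵥ (T *ᵥ ofLp x)) i = inner ℝ (toLp 2 (T *ᵥ Φ i)) x :=
    calc (Φ *ᵥ (T *ᵥ ofLp x)) i = Φ i ⬝ᵥ (T *ᵥ ofLp x) := rfl
      _ = (T *ᵥ Φ i) ⬝ᵥ ofLp x := by rw [dotProduct_mulVec, ← mulVec_transpose, hT.eq]
      _ = inner ℝ (toLp 2 (T *ᵥ Φ i)) x := by
        rw [EuclideanSpace.inner_eq_star_dotProduct, ofLp_toLp, star_trivial, dotProduct_comm]
  rw [hinner]
  exact abs_real_inner_le_norm _ _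

end Matrix

namespace Matrix.PosSemidef

section RCLike

open scoped ComplexOrder

variable {n 𝕜 : Type*} [Fintype n] [RCLike 𝕜] [DecidableEq n] {A : Matrix n n 𝕜}

theorem isHermitian_sqrt (hA : A.PosSemidef) : hA.sqrt.IsHermitian := by
  simp [IsHermitian, sqrt, Matrix.mul_assoc, star_eq_conjTranspose, diagonal_conjTranspose,
    Function.comp_def, Pi.star_def, RCLike.star_def]

theorem sqrt_mul_self (hA : A.PosSemidef) : hA.sqrt * hA.sqrt = A := by
  have hsqrt : hA.sqrt = Unitary.conjStarAlgAut 𝕜 _ hA.1.eigenvectorUnitary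
      (diagonal (((↑) : ℝ → 𝕜) ∘ (fun x => √x) ∘ hA.1.eigenvalues)) := rfl
  conv_rhs => rw [hA.1.spectral_theorem]
  rw [hsqrt, ← map_mul, diagonal_mul_diagonal]
  congr 2
  ext i
  simp [← RCLike.ofReal_mul, Real.mul_self_sqrt (hA.eigenvalues_nonneg i)]

end RCLike

variable {m n : Type*} [Fintype m] [Fintype n] [DecidableEq n] {A : Matrix n n ℝ}

theorem isSymm_sqrt (hA : A.PosSemidef) : hA.sqrt.IsSymm := by
  simpa using hA.isHermitian_sqrt

theorem norm_toLp_sqrt_mulVec_sq (hA : A.PosSemidef) (v : n → ℝ) :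
    ‖toLp 2 (hA.sqrt *ᵥ v)‖ ^ 2 = v ⬝ᵥ (A *ᵥ v) := by
  rw [← real_inner_self_eq_norm_sq, EuclideanSpace.inner_toLp_toLp, star_trivial,
    dotProduct_mulVec, ← vecMul_transpose, vecMul_vecMul, hA.isSymm_sqrt.eq, hA.sqrt_mul_self,
    ← dotProduct_mulVec]

theorem norm_toLp_sqrt_mulVec_le [DecidableEq m] {Φ : Matrix m n ℝ} {μ : m → ℝ}
    (hμ0 : ∀ i, 0 ≤ μ i) (hμ1 : ∑ i, μ i = 1) (hS : (Φᵀ * diagonal μ * Φ).PosSemidef)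
    {v : n → ℝ} {B : ℝ} (hB : 0 ≤ B) (hv : ∀ i, |(Φ *ᵥ v) i| ≤ B) :
    ‖toLp 2 (hS.sqrt *ᵥ v)‖ ≤ B := by
  rw [← pow_le_pow_iff_left₀ (norm_nonneg _) hB two_ne_zero, norm_toLp_sqrt_mulVec_sq,
    dotProduct_transpose_mul_diagonal_mul_mulVec]
  calc ∑ i, μ i * (Φ *ᵥ v) i ^ 2 ≤ ∑ i, μ i * B ^ 2 := Finset.sum_le_sum fun i _ =>
        mul_le_mul_of_nonneg_left (sq_le_sq' (abs_le.1 (hv i)).1 (abs_le.1 (hv i)).2) (hμ0 i)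
    _ = B ^ 2 := by rw [← Finset.sum_mul, hμ1, one_mul]

end Matrix.PosSemidef

theorem stmt_5_general {S : Type*} [Fintype S] [DecidableEq S]
    (d : ℕ)
    (Φ : Matrix S (Fin d) ℝ) (μ : S → ℝ)
    (hμ0 : ∀ i, 0 ≤ μ i) (hμ1 : ∑ i, μ i = 1)
    (P : Matrix S S ℝ) (hP0 : ∀ i j, 0 ≤ P i j) (hP1 : ∀ i, ∑ j, P i j = 1)
    (Scov Scr : Matrix (Fin d) (Fin d) ℝ)
    (hScov : Scov = Φᵀ * Matrix.diagonal μ * Φ)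
    (hScr : Scr = Φᵀ * Matrix.diagonal μ * P * Φ)
    (hcov : Scov.PosDef)
    (hcomplete : ∀ θ : Fin d → ℝ, ∃ θ' : Fin d → ℝ, Φ *ᵥ θ' = P *ᵥ (Φ *ᵥ θ)) :
    ∀ j : ℕ,
      ‖(hcov.posSemidef.sqrt⁻¹ * Scr * hcov.posSemidef.sqrt⁻¹) ^ j‖ ≤
        ⨆ i : S, ‖(WithLp.equiv 2 (Fin d → ℝ)).symm
          (hcov.posSemidef.sqrt⁻¹ *ᵥ fun j' => Φ i j')‖ := by
  intro j
  subst hScov hScr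
  set R := hcov.posSemidef.sqrt
  obtain ⟨M, hM⟩ := exists_mul_eq_of_forall_exists_mulVec_eq (C := P * Φ) fun θ => by
    simpa only [← mulVec_mulVec] using hcomplete θ
  have hRR : R * R = Φᵀ * diagonal μ * Φ := hcov.posSemidef.sqrt_mul_self
  have hR : IsUnit R := isUnit_of_mul_isUnit_left (hRR ▸ hcov.isUnit)
  have hcross : Φᵀ * diagonal μ * P * Φ = R * R * M := by
    rw [Matrix.mul_assoc _ P, ← hM, ← Matrix.mul_assoc, hRR]
  have hPj : P ^ j ∈ rowStochastic ℝ S := pow_mem (mem_rowStochastic_iff_sum.2 ⟨hP0, hP1⟩) j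
  have hρ0 : 0 ≤ ⨆ i, ‖toLp 2 (R⁻¹ *ᵥ Φ i)‖ := Real.iSup_nonneg fun _ => norm_nonneg _
  rw [hcross, inv_mul_mul_self_mul_mul_inv_pow hR]
  refine l2_opNorm_le_of_forall_norm_le hρ0 fun x => ?_
  rw [← mulVec_mulVec, ← mulVec_mulVec]
  refine hcov.posSemidef.norm_toLp_sqrt_mulVec_le hμ0 hμ1 (mul_nonneg hρ0 (norm_nonneg x))
    fun i => ?_
  rw [mulVec_mulVec, mul_pow_eq_pow_mul_of_mul_eq hM, ← mulVec_mulVec]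
  refine abs_mulVec_le_of_mem_rowStochastic hPj (fun s => ?_) i
  have hleverage : ‖toLp 2 (R⁻¹ *ᵥ Φ s)‖ ≤ ⨆ i, ‖toLp 2 (R⁻¹ *ᵥ Φ i)‖ :=
    le_ciSup (Set.finite_range fun i => ‖toLp 2 (R⁻¹ *ᵥ Φ i)‖).bddAbove s
  exact (abs_mulVec_mulVec_apply_le hcov.posSemidef.isSymm_sqrt.inv Φ x s).trans
    (mul_le_mul_of_nonneg_right hleverage (norm_nonneg x))

/-- Lemma A.2: Bellman completeness implies that all powers of the whitened
cross-covariance matrix have operator norm at most the statistical leverage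
`ρ = max_i ‖Σ_cov^{-1/2} φ_i‖₂`.  Here `Φ` stacks the features, `μ` is the
offline distribution and `P` is the (row-stochastic) transition matrix. -/
theorem stmt_5 {S : Type*} [Fintype S] [DecidableEq S] [Nonempty S]
    (d : ℕ) (hd : 1 ≤ d)
    (Φ : Matrix S (Fin d) ℝ) (μ : S → ℝ)
    (hμ0 : ∀ i, 0 ≤ μ i) (hμ1 : ∑ i, μ i = 1)
    (P : Matrix S S ℝ) (hP0 : ∀ i j, 0 ≤ P i j) (hP1 : ∀ i, ∑ j, P i j = 1)
    (Scov Scr : Matrix (Fin d) (Fin d) ℝ)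
    (hScov : Scov = Φᵀ * Matrix.diagonal μ * Φ)
    (hScr : Scr = Φᵀ * Matrix.diagonal μ * P * Φ)
    (hcov : Scov.PosDef)
    (hcomplete : ∀ θ : Fin d → ℝ, ∃ θ' : Fin d → ℝ, Φ *ᵥ θ' = P *ᵥ (Φ *ᵥ θ)) :
    ∀ j : ℕ,
      ‖(hcov.posSemidef.sqrt⁻¹ * Scr * hcov.posSemidef.sqrt⁻¹) ^ j‖ ≤
        ⨆ i : S, ‖(WithLp.equiv 2 (Fin d → ℝ)).symm
          (hcov.posSemidef.sqrt⁻¹ *ᵥ fun j' => Φ i j')‖ :=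
  stmt_5_general d Φ μ hμ0 hμ1 P hP0 hP1 Scov Scr hScov hScr hcov hcomplete
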